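/- For any finite set of fluents F and finite set of agents AG, any S5 pointed Kripke structure satisfying the initial statements of a consistent definite action theory is equivalent to an S5 pointed Kripke structure with at most 2^{|F|} worlds. Consequently, up to equivalence, a consistent definite action theory has only finitely many initial S5-states. -/

import Mathlib

/-- Belief formulae over a set of agents `A` and a set of fluents `F`:
propositional formulae extended with belief operators `B_i` (`bel`),
group knowledge `E_α` (`ebel`) and common knowledge `C_α` (`cbel`). -/
inductive BForm (A F : Type) : Type where
  | top  : BForm A F
  | atom : F → BForm A F
  | neg  : BForm A F → BForm A F
  | conj : BForm A F → BForm A F → BForm A F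
  | disj : BForm A F → BForm A F → BForm A F
  | bel  : A → BForm A F → BForm A F
  | ebel : Set A → BForm A F → BForm A F
  | cbel : Set A → BForm A F → BForm A F

/-- A Kripke structure: a valuation of fluents at each world and an
accessibility relation for each agent. -/
structure Kripke (A W F : Type) where
  val : W → F → Prop
  rel : A → W → W → Prop

/-- Iterated group operator: `Esat M α P k w` says `E_α^k P` holds at `w`. -/
def Esat {A W F : Type} (M : Kripke A W F) (α : Set A) (P : W → Prop) : ℕ → W → Prop
  | 0, w => P w
  | k + 1, w => ∀ i ∈ α, ∀ v, M.rel i w v → Esat M α P k v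

/-- Kripke satisfaction of belief formulae.  Common knowledge `C_α φ` holds at
`w` iff `E_α^k φ` holds at `w` for every `k ≥ 0`. -/
def sat {A W F : Type} (M : Kripke A W F) : W → BForm A F → Prop
  | _, .top => True
  | w, .atom f => M.val w f
  | w, .neg φ => ¬ sat M w φ
  | w, .conj φ ψ => sat M w φ ∧ sat M w ψ
  | w, .disj φ ψ => sat M w φ ∨ sat M w ψ
  | w, .bel i φ => ∀ v, M.rel i w v → sat M v φ
  | w, .ebel α φ => ∀ i ∈ α, ∀ v, M.rel i w v → sat M v φ
  | w, .cbel α φ => ∀ k : ℕ, Esat M α (fun v => sat M v φ) k w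

/-- `M` is an S5 structure: each accessibility relation is an equivalence
relation (reflexive, symmetric, transitive). -/
def S5 {A W F : Type} (M : Kripke A W F) : Prop := ∀ i, Equivalence (M.rel i)

/-- Reachability via finite paths over the union of all accessibility relations. -/
def reach {A W F : Type} (M : Kripke A W F) : W → W → Prop :=
  Relation.ReflTransGen (fun u v => ∃ i, M.rel i u v)

/-- Reachability via finite paths labeled by agents in `α` only. -/
def reachIn {A W F : Type} (M : Kripke A W F) (α : Set A) : W → W → Prop :=
  Relation.ReflTransGen (fun u v => ∃ i ∈ α, M.rel i u v)

/-- Two pointed Kripke structures are equivalent if they satisfy the same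
belief formulae. -/
def equivState {A W W' F : Type} (M : Kripke A W F) (s : W) (M' : Kripke A W' F) (s' : W') : Prop :=
  ∀ φ : BForm A F, sat M s φ ↔ sat M' s' φ

/-- Fluent (purely propositional) formulae: no modal operators. -/
def IsProp {A F : Type} : BForm A F → Prop
  | .top => True
  | .atom _ => True
  | .neg φ => IsProp φ
  | .conj φ ψ => IsProp φ ∧ IsProp ψ
  | .disj φ ψ => IsProp φ ∧ IsProp ψ
  | .bel _ _ => False
  | .ebel _ _ => False
  | .cbel _ _ => False

/-- The forms of initial statements of a definite action theory:
`initially φ`, `initially C φ`, `initially C(B_i φ)`,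
`initially C(B_i φ ∨ B_i ¬φ)`, `initially C(¬B_i φ ∧ ¬B_i ¬φ)`. -/
inductive InitStmt (A F : Type) : Type where
  | base : BForm A F → InitStmt A F
  | common : BForm A F → InitStmt A F
  | cBel : A → BForm A F → InitStmt A F
  | cWhether : A → BForm A F → InitStmt A F
  | cIgnorant : A → BForm A F → InitStmt A F

/-- The belief formula expressed by an initial statement (`C` is common
knowledge among all agents). -/
def InitStmt.form {A F : Type} : InitStmt A F → BForm A F
  | .base φ => φ
  | .common φ => .cbel Set.univ φ
  | .cBel i φ => .cbel Set.univ (.bel i φ)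
  | .cWhether i φ => .cbel Set.univ (.disj (.bel i φ) (.bel i (.neg φ)))
  | .cIgnorant i φ => .cbel Set.univ (.conj (.neg (.bel i φ)) (.neg (.bel i (.neg φ))))

/-- The fluent formula occurring in an initial statement. -/
def InitStmt.inner {A F : Type} : InitStmt A F → BForm A F
  | .base φ => φ
  | .common φ => φ
  | .cBel _ φ => φ
  | .cWhether _ φ => φ
  | .cIgnorant _ φ => φ

/-- A definite action theory: a set of initial statements whose embedded
formulae are fluent formulae, such that for each fluent formula `φ` and agent
`i` one of the statements `C(B_i φ)`, `C(B_i φ ∨ B_i ¬φ)`,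
`C(¬B_i φ ∧ ¬B_i ¬φ)` belongs to the theory. -/
structure DefiniteTheory (A F : Type) where
  stmts : Set (InitStmt A F)
  wf : ∀ st ∈ stmts, IsProp st.inner
  definite : ∀ φ : BForm A F, IsProp φ → ∀ i : A,
    InitStmt.cBel i φ ∈ stmts ∨ InitStmt.cWhether i φ ∈ stmts ∨ InitStmt.cIgnorant i φ ∈ stmts

/-- `(M,s)` is an initial state of the theory `T`: it satisfies every initial
statement of `T`. -/
def InitialState {A W F : Type} (T : DefiniteTheory A F) (M : Kripke A W F) (s : W) : Prop :=
  ∀ st ∈ T.stmts, sat M s st.form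

/-!
Identify the worlds reachable from the designated world that carry the same valuation.
Definiteness makes this sound: for every valuation `t` with characteristic formula `χ_t`, the
theory fixes as common knowledge whether agent `i` believes `χ_t`, believes `¬χ_t`, or neither.
So two reachable worlds with the same valuation see, through `i`, the same valuations, i.e.
valuation equality is a bisimulation. The collapsed structure lives on `F → Prop`, which has
`2^|F|` elements, and there are only finitely many Kripke structures on it.
-/

variable {A F : Type}

namespace BForm

def conjList (l : List (BForm A F)) : BForm A F := l.foldr conj top

lemma isProp_conjList {l : List (BForm A F)} (h : ∀ φ ∈ l, IsProp φ) :
    IsProp (conjList l) := by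
  induction l with
  | nil => trivial
  | cons φ l ih =>
    exact ⟨h φ List.mem_cons_self, ih fun ψ hψ => h ψ (List.mem_cons_of_mem φ hψ)⟩

lemma sat_conjList {W : Type} (M : Kripke A W F) (w : W) (l : List (BForm A F)) :
    sat M w (conjList l) ↔ ∀ φ ∈ l, sat M w φ := by
  induction l with
  | nil => simp [conjList, sat]
  | cons φ l ih => simp [conjList, sat, ← ih]

open Classical in
noncomputable def lit (t : F → Prop) (f : F) : BForm A F :=
  if t f then atom f else neg (atom f)

lemma isProp_lit (t : F → Prop) (f : F) : IsProp (lit (A := A) t f) := by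
  unfold lit; split <;> trivial

lemma sat_lit {W : Type} (M : Kripke A W F) (w : W) (t : F → Prop) (f : F) :
    sat M w (lit t f) ↔ (M.val w f ↔ t f) := by
  unfold lit; split <;> simp only [sat] <;> tauto

noncomputable def charForm [Fintype F] (t : F → Prop) : BForm A F :=
  conjList (Finset.univ.toList.map (lit t))

lemma isProp_charForm [Fintype F] (t : F → Prop) : IsProp (charForm (A := A) t) :=
  isProp_conjList (by simp [isProp_lit])

lemma sat_charForm [Fintype F] {W : Type} (M : Kripke A W F) (w : W) (t : F → Prop) :
    sat M w (charForm t) ↔ M.val w = t := by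
  simp [charForm, sat_conjList, sat_lit, funext_iff]

end BForm

lemma sat_of_sat_cbel_of_reachIn {W : Type} {M : Kripke A W F} {α : Set A} {φ : BForm A F}
    {s w : W} (h : sat M s (.cbel α φ)) (hw : reachIn M α s w) : sat M w φ := by
  suffices ∀ k, Esat M α (fun v => sat M v φ) k w from this 0
  induction hw with
  | refl => exact h
  | tail _ hstep ih =>
    obtain ⟨i, hi, hr⟩ := hstep
    exact fun k => ih (k + 1) i hi _ hr

lemma InitialState.exists_rel_val_eq [Fintype F] {W : Type} {T : DefiniteTheory A F}
    {M : Kripke A W F} {s : W} (hI : InitialState T M s) (hrefl : ∀ i w, M.rel i w w)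
    {u u' v : W} (hu : reach M s u) (hu' : reach M s u') (hval : M.val u = M.val u') {i : A}
    (hv : M.rel i u v) : ∃ v', M.rel i u' v' ∧ M.val v' = M.val v := by
  have common {ψ : BForm A F} {w : W} (h : sat M s (.cbel Set.univ ψ)) (hw : reach M s w) :
      sat M w ψ :=
    sat_of_sat_cbel_of_reachIn h
      (Relation.ReflTransGen.mono (fun _ _ ⟨j, hj⟩ => ⟨j, trivial, hj⟩) _ _ hw)
  set χ : BForm A F := .charForm (M.val v)
  have sat_χ {w : W} : sat M w χ ↔ M.val w = M.val v := BForm.sat_charForm M w _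
  rcases T.definite χ (BForm.isProp_charForm _) i with h | h | h
  · exact ⟨u', hrefl i u', sat_χ.1 (common (hI _ h) hu' u' (hrefl i u'))⟩
  · rcases common (hI _ h) hu with hb | hb
    · exact ⟨u', hrefl i u', hval ▸ sat_χ.1 (hb u (hrefl i u))⟩
    · exact absurd (sat_χ.2 rfl) (hb v hv)
  · obtain ⟨-, hnb⟩ := common (hI _ h) hu'
    by_contra hne
    exact hnb fun v' hv' hχ => hne ⟨v', hv', sat_χ.1 hχ⟩

namespace Kripke

variable {W W' : Type}

structure IsBisimulation (M : Kripke A W F) (M' : Kripke A W' F) (Z : W → W' → Prop) :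
    Prop where
  val_eq : ∀ ⦃w w'⦄, Z w w' → M.val w = M'.val w'
  forth : ∀ ⦃w w'⦄, Z w w' → ∀ i v, M.rel i w v → ∃ v', M'.rel i w' v' ∧ Z v v'
  back : ∀ ⦃w w'⦄, Z w w' → ∀ i v', M'.rel i w' v' → ∃ v, M.rel i w v ∧ Z v v'

namespace IsBisimulation

variable {M : Kripke A W F} {M' : Kripke A W' F} {Z : W → W' → Prop}

lemma forall_rel_iff (hZ : IsBisimulation M M' Z) {P : W → Prop} {P' : W' → Prop}
    (hP : ∀ ⦃w w'⦄, Z w w' → (P w ↔ P' w')) (i : A) {w : W} {w' : W'} (h : Z w w') :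
    (∀ v, M.rel i w v → P v) ↔ ∀ v', M'.rel i w' v' → P' v' := by
  constructor
  · intro hw v' hv'
    obtain ⟨v, hv, hZv⟩ := hZ.back h i v' hv'
    exact (hP hZv).1 (hw v hv)
  · intro hw' v hv
    obtain ⟨v', hv', hZv⟩ := hZ.forth h i v hv
    exact (hP hZv).2 (hw' v' hv')

lemma esat_iff (hZ : IsBisimulation M M' Z) {P : W → Prop} {P' : W' → Prop}
    (hP : ∀ ⦃w w'⦄, Z w w' → (P w ↔ P' w')) (α : Set A) (k : ℕ) {w : W} {w' : W'}
    (h : Z w w') : Esat M α P k w ↔ Esat M' α P' k w' := by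
  induction k generalizing w w' with
  | zero => exact hP h
  | succ k ih => exact forall₂_congr fun i _ => hZ.forall_rel_iff (fun _ _ => ih) i h

theorem sat_iff (hZ : IsBisimulation M M' Z) (φ : BForm A F) {w : W} {w' : W'} (h : Z w w') :
    sat M w φ ↔ sat M' w' φ := by
  induction φ generalizing w w' with
  | top => exact Iff.rfl
  | atom f => simp only [sat, hZ.val_eq h]
  | neg φ ih => exact not_congr (ih h)
  | conj φ ψ ihφ ihψ => exact and_congr (ihφ h) (ihψ h)
  | disj φ ψ ihφ ihψ => exact or_congr (ihφ h) (ihψ h)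
  | bel i φ ih => exact hZ.forall_rel_iff (fun _ _ => ih) i h
  | ebel α φ ih => exact forall₂_congr fun i _ => hZ.forall_rel_iff (fun _ _ => ih) i h
  | cbel α φ ih => exact forall_congr' fun k => hZ.esat_iff (fun _ _ => ih) α k h

end IsBisimulation

instance [Finite A] [Finite W] [Finite F] : Finite (Kripke A W F) :=
  Finite.of_injective (fun M => (M.val, M.rel)) fun M N h => by
    cases M; cases N; cases h; rfl

/-- Unreachable valuations are kept as isolated worlds, so that the world type is always
`F → Prop`. -/
def quotVal (M : Kripke A W F) (s : W) : Kripke A (F → Prop) F where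
  val := id
  rel i p q := p = q ∨ ∃ u v, reach M s u ∧ M.rel i u v ∧ M.val u = p ∧ M.val v = q

variable [Fintype F] {T : DefiniteTheory A F} {M : Kripke A W F} {s : W}

lemma S5_quotVal (h5 : S5 M) (hI : InitialState T M s) : S5 (M.quotVal s) := fun i =>
  { refl := fun _ => Or.inl rfl
    symm := by
      rintro _ _ (rfl | ⟨u, v, hu, hv, rfl, rfl⟩)
      · exact Or.inl rfl
      · exact Or.inr ⟨v, u, hu.tail ⟨i, hv⟩, (h5 i).symm hv, rfl, rfl⟩
    trans := by
      rintro _ _ r (rfl | ⟨u, v, hu, hv, rfl, rfl⟩) h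
      · exact h
      rcases h with rfl | ⟨u₂, v₂, hu₂, hv₂, hval, rfl⟩
      · exact Or.inr ⟨u, v, hu, hv, rfl, rfl⟩
      obtain ⟨v', hv', hval'⟩ :=
        hI.exists_rel_val_eq (fun j => (h5 j).refl) hu₂ (hu.tail ⟨i, hv⟩) hval hv₂
      exact Or.inr ⟨u, v', hu, (h5 i).trans hv hv', rfl, hval'⟩ }

lemma isBisimulation_quotVal (h5 : S5 M) (hI : InitialState T M s) :
    IsBisimulation M (M.quotVal s) fun w p => reach M s w ∧ M.val w = p where
  val_eq := by rintro w _ ⟨-, rfl⟩; rfl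
  forth := by
    rintro w _ ⟨hw, rfl⟩ i v hv
    exact ⟨M.val v, Or.inr ⟨w, v, hw, hv, rfl, rfl⟩, hw.tail ⟨i, hv⟩, rfl⟩
  back := by
    rintro w _ ⟨hw, rfl⟩ i _ (rfl | ⟨u, v, hu, hv, hval, rfl⟩)
    · exact ⟨w, (h5 i).refl w, hw, rfl⟩
    · obtain ⟨v', hv', hval'⟩ := hI.exists_rel_val_eq (fun j => (h5 j).refl) hu hw hval hv
      exact ⟨v', hv', hw.tail ⟨i, hv'⟩, hval'⟩

lemma equivState_quotVal (h5 : S5 M) (hI : InitialState T M s) :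
    equivState M s (M.quotVal s) (M.val s) := fun φ =>
  (isBisimulation_quotVal h5 hI).sat_iff φ ⟨.refl, rfl⟩

end Kripke

/-- Every S5 state satisfying the initial statements of a
definite action theory is equivalent to an S5 state with at most `2^{|F|}`
worlds; consequently, up to equivalence, the theory has only finitely many
initial S5-states. -/
theorem stmt13 {A F : Type} [Fintype A] [Fintype F] (T : DefiniteTheory A F) :
    (∀ (W : Type) (M : Kripke A W F) (s : W), S5 M → InitialState T M s →
      ∃ (W' : Type) (M' : Kripke A W' F) (s' : W'),
        S5 M' ∧ Finite W' ∧ Nat.card W' ≤ 2 ^ Fintype.card F ∧ equivState M s M' s') ∧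
    (∃ Reps : Set (Kripke A (F → Prop) F × (F → Prop)), Reps.Finite ∧
      ∀ (W : Type) (M : Kripke A W F) (s : W), S5 M → InitialState T M s →
        ∃ r ∈ Reps, equivState M s r.1 r.2) := by
  have card_valuations : Nat.card (F → Prop) = 2 ^ Fintype.card F := by
    simp [Nat.card_fun, Nat.card_eq_fintype_card]
  refine ⟨fun W M s h5 hI => ?_, Set.univ, Set.finite_univ, fun W M s h5 hI => ?_⟩
  · exact ⟨F → Prop, M.quotVal s, M.val s, M.S5_quotVal h5 hI, inferInstance,
      card_valuations.le, M.equivState_quotVal h5 hI⟩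
  · exact ⟨(M.quotVal s, M.val s), Set.mem_univ _, M.equivState_quotVal h5 hI⟩
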